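/- arXiv:2009.13021 — 2 statements merged into one kernel-verified Lean document; each statement's English description precedes it below -/
import Mathlib

section
/- For the two-market SMSPG, the social welfare difference between low and high price strategies satisfies SW^l - SW^h = (5 b₂ (a₁ - a₂)² + 7(b₁ + b₂)(a₂ - a_s)²)/(32 b₂ (b₁ + b₂)) ≥ 0, where SW^h = 7(a₁ - a_s)²/(32 b₁) and SW^l = 3(a₁ - a₂)²/(8(b₁ + b₂)) + (7/2)·B·(X^l)² with B = (1/b₁ + 1/b₂)⁻¹ and X^l = ((a₁/b₁ + a₂/b₂)B - a_s)/(4B). -/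
/-- Two-market SMSPG social welfare: SW^l - SW^h equals the stated
nonnegative closed form, hence SW^l ≥ SW^h. -/
theorem stmt_18 (a1 a2 as b1 b2 B Xl SWh SWl : ℝ)
    (h1 : a2 ≤ a1) (h2 : as ≤ a2) (hb1 : 0 < b1) (hb2 : 0 < b2)
    (hB : B = (b1⁻¹ + b2⁻¹)⁻¹)
    (hXl : Xl = ((a1/b1 + a2/b2) * B - as)/(4*B))
    (hSWh : SWh = 7 * (a1 - as)^2 / (32 * b1))
    (hSWl : SWl = 3 * (a1 - a2)^2 / (8 * (b1 + b2)) + (7/2) * B * Xl^2) :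
    SWl - SWh =
      (5 * b2 * (a1 - a2)^2 + 7 * (b1 + b2) * (a2 - as)^2) /
        (32 * b2 * (b1 + b2)) ∧
    SWh ≤ SWl := by
  have hb12 : (0:ℝ) < b1 + b2 := by linarith
  have hBpos : 0 < B := by
    rw [hB]; positivity
  have hBval : B = b1 * b2 / (b1 + b2) := by
    rw [hB]; field_simp; ring
  have key : SWl - SWh =
      (5 * b2 * (a1 - a2)^2 + 7 * (b1 + b2) * (a2 - as)^2) /
        (32 * b2 * (b1 + b2)) := by
    subst hSWl hSWh hXl
    rw [hBval]
    field_simp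
    ring
  refine ⟨key, ?_⟩
  have hnn : 0 ≤ (5 * b2 * (a1 - a2)^2 + 7 * (b1 + b2) * (a2 - as)^2) /
        (32 * b2 * (b1 + b2)) := by positivity
  linarith
end

section
/- In the two-market SMSPG, the source is indifferent between the high price strategy (utility (a₁ - a_s)²/8) and the low price strategy (utility (a₁ + a₂ - 2a_s)²/16) exactly when a₁ = (1 + √2) a₂ - √2 a_s; moreover for a₁ < (1+√2)a₂ - √2 a_s (with a₁ > a₂ > a_s) the low price strategy dominates, and for a₁ > (1+√2)a₂ - √2 a_s the high price strategy dominates. -/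
/-!
With `u = a₁ - a_s` and `v = a₁ + a₂ - 2a_s`, the gap `L - H = (v² - 2u²)/16` is a difference of
squares, `(v + √2 u)(v - √2 u)/16`. Since `(√2 - 1)(√2 + 1) = 1`, the factor `v - √2 u` is
`(√2 - 1)` times the distance `(1 + √2)a₂ - √2 a_s - a₁` of `a₁` below the threshold, and when
`a₁ > a₂ > a_s` all remaining factors are positive. So `L - H` has the sign of that distance.
-/

open Real

lemma low_sub_high_eq_mul_threshold_sub (a1 a2 as : ℝ) :
    (a1 + a2 - 2*as)^2/16 - (a1 - as)^2/8 =
      (√2 - 1) * (a1 + a2 - 2*as + √2 * (a1 - as)) / 16 *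
        ((1 + √2) * a2 - √2 * as - a1) := by
  have hsqrt : √2 ^ 2 = 2 := sq_sqrt zero_le_two
  linear_combination
    ((a1 - as)^2/16 - (a2 - as) * (a1 + a2 - 2*as + √2 * (a1 - as))/16) * hsqrt

lemma low_sub_high_coeff_pos {a1 a2 as : ℝ} (h1 : a2 < a1) (h2 : as < a2) :
    0 < (√2 - 1) * (a1 + a2 - 2*as + √2 * (a1 - as)) / 16 := by
  have hsqrt : 1 < √2 := one_lt_sqrt_two
  have hsum : 0 < a1 + a2 - 2*as + √2 * (a1 - as) := by nlinarith
  exact div_pos (mul_pos (sub_pos.2 hsqrt) hsum) (by norm_num)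

lemma eq_lt_gt_iff_of_sub_eq_pos_mul {R : Type*} [CommRing R] [LinearOrder R]
    [IsStrictOrderedRing R] {x y a t c : R} (hc : 0 < c) (h : y - x = c * (t - a)) :
    (x = y ↔ a = t) ∧ (x < y ↔ a < t) ∧ (y < x ↔ t < a) := by
  refine ⟨?_, ?_, ?_⟩
  · rw [eq_comm, ← sub_eq_zero, h, mul_eq_zero, or_iff_right hc.ne', sub_eq_zero, eq_comm]
  · rw [← sub_pos, h, mul_pos_iff_of_pos_left hc, sub_pos]
  · have h' : x - y = c * (a - t) := by linear_combination -h
    rw [← sub_pos, h', mul_pos_iff_of_pos_left hc, sub_pos]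

theorem stmt_19_general (a1 a2 as : ℝ) (h1 : a2 < a1) (h2 : as < a2) :
    ((a1 - as)^2/8 = (a1 + a2 - 2*as)^2/16 ↔
      a1 = (1 + Real.sqrt 2) * a2 - Real.sqrt 2 * as) ∧
    ((a1 - as)^2/8 < (a1 + a2 - 2*as)^2/16 ↔
      a1 < (1 + Real.sqrt 2) * a2 - Real.sqrt 2 * as) ∧
    ((a1 + a2 - 2*as)^2/16 < (a1 - as)^2/8 ↔
      (1 + Real.sqrt 2) * a2 - Real.sqrt 2 * as < a1) :=
  eq_lt_gt_iff_of_sub_eq_pos_mul (low_sub_high_coeff_pos h1 h2)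
    (low_sub_high_eq_mul_threshold_sub a1 a2 as)

/-- Two-market SMSPG: high-price utility H = (a₁ - a_s)²/8 versus low-price
utility L = (a₁ + a₂ - 2a_s)²/16; indifference exactly at
a₁ = (1+√2)a₂ - √2 a_s, with the low price strategy dominating below it and
the high price strategy dominating above it. -/
theorem stmt_19 (a1 a2 as : ℝ) (h1 : a2 < a1) (h2 : as < a2) (h3 : 0 < as) :
    ((a1 - as)^2/8 = (a1 + a2 - 2*as)^2/16 ↔
      a1 = (1 + Real.sqrt 2) * a2 - Real.sqrt 2 * as) ∧
    ((a1 - as)^2/8 < (a1 + a2 - 2*as)^2/16 ↔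
      a1 < (1 + Real.sqrt 2) * a2 - Real.sqrt 2 * as) ∧
    ((a1 + a2 - 2*as)^2/16 < (a1 - as)^2/8 ↔
      (1 + Real.sqrt 2) * a2 - Real.sqrt 2 * as < a1) :=
  stmt_19_general a1 a2 as h1 h2
end
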